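/- Fix a ∈ (1,2). There exist constants 0 < c ≤ C such that for all λ ∈ (0,1), c·λ^{a-1} ≤ Σ_{j=1}^∞ (jλ/(jλ+1)) j^{-a} ≤ C·λ^{a-1}. -/

import Mathlib

/-!
Put `N = ⌊1/λ⌋`, so that `Nλ ∈ [1/2, 1]` and `N^{1-a} ≍ λ^{a-1}`. For `j ≤ N` the factor
`jλ/(jλ+1)` lies between `jλ/2` and `jλ`, so these terms add up to `≍ λ ∑_{j ≤ N} j^{1-a} ≍ λ N^{2-a}
≍ N^{1-a}`, which needs `a < 2`. For `j > N` the factor is at most `1`, and since `a > 1` the tail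
`∑_{j > N} j^{-a}` is `≲ N^{1-a}`. Both power sums are bounded by telescoping with the tangent-line
inequalities of `x ↦ x^p` at the right endpoint of `[x - 1, x]`.
-/

open Real Finset

section TangentLine

variable {x : ℝ}

lemma mul_rpow_sub_one_le_rpow_sub_rpow {p : ℝ} (hp0 : 0 ≤ p) (hp1 : p ≤ 1) (hx : 1 ≤ x) :
    p * x ^ (p - 1) ≤ x ^ p - (x - 1) ^ p := by
  have hx0 : 0 < x := by linarith
  have hBernoulli : (1 + -(1 / x)) ^ p ≤ 1 + p * -(1 / x) :=
    rpow_one_add_le_one_add_mul_self (by rw [neg_le_neg_iff, div_le_one hx0]; exact hx) hp0 hp1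
  have hsplit : (x - 1) ^ p = x ^ p * (1 + -(1 / x)) ^ p := by
    rw [← mul_rpow hx0.le (by rw [← sub_eq_add_neg, sub_nonneg, div_le_one hx0]; exact hx)]
    congr 1
    field_simp
    ring
  have hderiv : x ^ p * (p * (1 / x)) = p * x ^ (p - 1) := by
    rw [rpow_sub_one hx0.ne']
    ring
  rw [hsplit]
  nlinarith [mul_le_mul_of_nonneg_left hBernoulli (rpow_nonneg hx0.le p)]

lemma mul_rpow_neg_sub_one_le_rpow_neg_sub_rpow_neg {q : ℝ} (hq : 0 ≤ q) (hx : 1 < x) :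
    q * x ^ (-q - 1) ≤ (x - 1) ^ (-q) - x ^ (-q) := by
  have hx0 : 0 < x := by linarith
  have hratio : 0 < (x - 1) / x := div_pos (by linarith) hx0
  -- `((x - 1) / x) ^ (-q) = exp (-q log (1 - 1/x)) ≥ 1 - q log (1 - 1/x) ≥ 1 + q / x`
  have hexp : 1 + q * (1 / x) ≤ ((x - 1) / x) ^ (-q) := by
    have hlog : log ((x - 1) / x) ≤ -(1 / x) := by
      have hsub : (x - 1) / x - 1 = -(1 / x) := by field_simp; ring
      exact hsub ▸ log_le_sub_one_of_pos hratio
    rw [rpow_def_of_pos hratio]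
    nlinarith [add_one_le_exp (log ((x - 1) / x) * -q)]
  have hsplit : (x - 1) ^ (-q) = x ^ (-q) * ((x - 1) / x) ^ (-q) := by
    rw [← mul_rpow hx0.le hratio.le]
    congr 1
    field_simp
  have hderiv : x ^ (-q) * (q * (1 / x)) = q * x ^ (-q - 1) := by
    rw [rpow_sub_one hx0.ne']
    ring
  rw [hsplit]
  nlinarith [mul_le_mul_of_nonneg_left hexp (rpow_nonneg hx0.le (-q))]

end TangentLine

lemma sum_range_rpow_sub_one_le {p : ℝ} (hp0 : 0 < p) (hp1 : p ≤ 1) (N : ℕ) :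
    ∑ j ∈ range N, ((j : ℝ) + 1) ^ (p - 1) ≤ (N : ℝ) ^ p / p := by
  rw [le_div_iff₀ hp0, sum_mul]
  calc ∑ j ∈ range N, ((j : ℝ) + 1) ^ (p - 1) * p
      ≤ ∑ j ∈ range N, (((j + 1 : ℕ) : ℝ) ^ p - (j : ℝ) ^ p) := by
        gcongr with j
        have h := mul_rpow_sub_one_le_rpow_sub_rpow hp0.le hp1 (x := (j : ℝ) + 1)
          (by linarith [j.cast_nonneg (α := ℝ)])
        rw [add_sub_cancel_right] at h
        push_cast
        linarith
    _ = (N : ℝ) ^ p := by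
        rw [sum_range_sub (fun j : ℕ => (j : ℝ) ^ p)]
        simp [zero_rpow hp0.ne']

lemma sum_range_rpow_neg_sub_one_le {q : ℝ} (hq : 0 < q) {N : ℕ} (hN : 1 ≤ N) (n : ℕ) :
    ∑ j ∈ range n, (((N + j : ℕ) : ℝ) + 1) ^ (-q - 1) ≤ (N : ℝ) ^ (-q) / q := by
  rw [le_div_iff₀ hq, sum_mul]
  calc ∑ j ∈ range n, (((N + j : ℕ) : ℝ) + 1) ^ (-q - 1) * q
      ≤ ∑ j ∈ range n, (((N + j : ℕ) : ℝ) ^ (-q) - ((N + (j + 1) : ℕ) : ℝ) ^ (-q)) := by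
        gcongr with j
        have hx : (1 : ℝ) < ((N + j : ℕ) : ℝ) + 1 := by
          have : (1 : ℝ) ≤ N := by exact_mod_cast hN
          push_cast
          linarith [j.cast_nonneg (α := ℝ)]
        have h := mul_rpow_neg_sub_one_le_rpow_neg_sub_rpow_neg hq.le hx
        rw [add_sub_cancel_right] at h
        rw [← add_assoc, Nat.cast_succ]
        linarith
    _ = (N : ℝ) ^ (-q) - ((N + n : ℕ) : ℝ) ^ (-q) := by
        rw [sum_range_sub' (fun j : ℕ => ((N + j : ℕ) : ℝ) ^ (-q))]
        simp
    _ ≤ (N : ℝ) ^ (-q) := sub_le_self _ (rpow_nonneg (Nat.cast_nonneg _) _)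

section RhoTerm

variable {a lam x : ℝ}

/-- The series of the theorem is `∑' j : ℕ, rhoTerm a lam (j + 1)`. -/
noncomputable def rhoTerm (a lam x : ℝ) : ℝ :=
  x * lam / (x * lam + 1) * x ^ (-a)

lemma rhoTerm_nonneg (hlam : 0 ≤ lam) (hx : 0 ≤ x) : 0 ≤ rhoTerm a lam x := by
  unfold rhoTerm
  positivity

lemma rhoTerm_le_rpow_neg (hlam : 0 ≤ lam) (hx : 0 ≤ x) : rhoTerm a lam x ≤ x ^ (-a) :=
  mul_le_of_le_one_left (rpow_nonneg hx _) (div_le_one_of_le₀ (by linarith) (by positivity))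

lemma mul_rpow_neg_eq_rpow_one_sub (hx : 0 < x) : x * x ^ (-a) = x ^ (1 - a) := by
  rw [sub_eq_neg_add, rpow_add_one hx.ne', mul_comm]

lemma rhoTerm_le_mul_rpow (hlam : 0 ≤ lam) (hx : 0 < x) : rhoTerm a lam x ≤ lam * x ^ (1 - a) :=
  calc rhoTerm a lam x ≤ x * lam * x ^ (-a) := by
        unfold rhoTerm
        gcongr
        exact div_le_self (by positivity) (le_add_of_nonneg_left (by positivity))
    _ = lam * x ^ (1 - a) := by rw [← mul_rpow_neg_eq_rpow_one_sub hx]; ring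

lemma half_mul_rpow_le_rhoTerm (hlam : 0 ≤ lam) (hx : 0 < x) (hxlam : x * lam ≤ 1) :
    lam / 2 * x ^ (1 - a) ≤ rhoTerm a lam x :=
  calc lam / 2 * x ^ (1 - a) = x * lam / 2 * x ^ (-a) := by
        rw [← mul_rpow_neg_eq_rpow_one_sub hx]; ring
    _ ≤ rhoTerm a lam x :=
        mul_le_mul_of_nonneg_right
          (div_le_div_of_nonneg_left (by positivity) (by positivity) (by linarith))
          (rpow_nonneg hx.le _)

lemma summable_rhoTerm (ha : 1 < a) (hlam : 0 ≤ lam) :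
    Summable fun j : ℕ => rhoTerm a lam ((j : ℝ) + 1) := by
  have hpow : Summable fun j : ℕ => ((j : ℝ) + 1) ^ (-a) := by
    have := (summable_nat_add_iff (f := fun n : ℕ => (n : ℝ) ^ (-a)) 1).2
      (summable_nat_rpow.2 (by linarith))
    simpa using this
  exact hpow.of_nonneg_of_le (fun j => rhoTerm_nonneg hlam (by positivity))
    (fun j => rhoTerm_le_rpow_neg hlam (by positivity))

lemma le_sum_range_rhoTerm (ha : 1 ≤ a) (hlam : 0 ≤ lam) {N : ℕ} (hNlam : N * lam ≤ 1) :
    N * lam / 2 * (N : ℝ) ^ (1 - a) ≤ ∑ j ∈ range N, rhoTerm a lam ((j : ℝ) + 1) :=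
  calc N * lam / 2 * (N : ℝ) ^ (1 - a) = ∑ _j ∈ range N, lam / 2 * (N : ℝ) ^ (1 - a) := by
        rw [sum_const, card_range, nsmul_eq_mul]
        ring
    _ ≤ ∑ j ∈ range N, rhoTerm a lam ((j : ℝ) + 1) := by
        gcongr with j hj
        have hjN : (j : ℝ) + 1 ≤ N := by exact_mod_cast mem_range.1 hj
        calc lam / 2 * (N : ℝ) ^ (1 - a) ≤ lam / 2 * ((j : ℝ) + 1) ^ (1 - a) :=
              mul_le_mul_of_nonneg_left
                (rpow_le_rpow_of_nonpos (by positivity) hjN (by linarith)) (by positivity)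
          _ ≤ rhoTerm a lam ((j : ℝ) + 1) :=
              half_mul_rpow_le_rhoTerm hlam (by positivity) (by nlinarith)

lemma sum_range_rhoTerm_le (ha1 : 1 ≤ a) (ha2 : a < 2) (hlam : 0 ≤ lam) (N : ℕ) :
    ∑ j ∈ range N, rhoTerm a lam ((j : ℝ) + 1) ≤ N * lam / (2 - a) * (N : ℝ) ^ (1 - a) :=
  calc ∑ j ∈ range N, rhoTerm a lam ((j : ℝ) + 1)
      ≤ ∑ j ∈ range N, lam * ((j : ℝ) + 1) ^ ((2 - a) - 1) := by
        gcongr with j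
        rw [show (2 - a) - 1 = 1 - a by ring]
        exact rhoTerm_le_mul_rpow hlam (by positivity)
    _ = lam * ∑ j ∈ range N, ((j : ℝ) + 1) ^ ((2 - a) - 1) := (mul_sum _ _ _).symm
    _ ≤ lam * ((N : ℝ) ^ (2 - a) / (2 - a)) := by
        gcongr
        exact sum_range_rpow_sub_one_le (by linarith) (by linarith) N
    _ = N * lam / (2 - a) * (N : ℝ) ^ (1 - a) := by
        rw [show 2 - a = (1 - a) + 1 by ring, rpow_add_one' (Nat.cast_nonneg N) (by linarith)]
        ring

lemma sum_range_rhoTerm_nat_add_le (ha : 1 < a) (hlam : 0 ≤ lam) {N : ℕ} (hN : 1 ≤ N) (n : ℕ) :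
    ∑ j ∈ range n, rhoTerm a lam (((N + j : ℕ) : ℝ) + 1) ≤ (N : ℝ) ^ (1 - a) / (a - 1) :=
  calc ∑ j ∈ range n, rhoTerm a lam (((N + j : ℕ) : ℝ) + 1)
      ≤ ∑ j ∈ range n, (((N + j : ℕ) : ℝ) + 1) ^ (-(a - 1) - 1) := by
        gcongr with j
        rw [show -(a - 1) - 1 = -a by ring]
        exact rhoTerm_le_rpow_neg hlam (by positivity)
    _ ≤ (N : ℝ) ^ (1 - a) / (a - 1) := by
        rw [← neg_sub a 1]
        exact sum_range_rpow_neg_sub_one_le (by linarith) hN n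

lemma le_tsum_rhoTerm (ha : 1 < a) (hlam : 0 ≤ lam) {N : ℕ} (hlo : 1 / 2 ≤ N * lam)
    (hhi : N * lam ≤ 1) :
    (N : ℝ) ^ (1 - a) / 4 ≤ ∑' j : ℕ, rhoTerm a lam ((j : ℝ) + 1) :=
  calc (N : ℝ) ^ (1 - a) / 4 ≤ N * lam / 2 * (N : ℝ) ^ (1 - a) := by
        nlinarith [rpow_nonneg (Nat.cast_nonneg N) (1 - a)]
    _ ≤ ∑ j ∈ range N, rhoTerm a lam ((j : ℝ) + 1) := le_sum_range_rhoTerm ha.le hlam hhi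
    _ ≤ ∑' j : ℕ, rhoTerm a lam ((j : ℝ) + 1) :=
        (summable_rhoTerm ha hlam).sum_le_tsum _ (fun j _ => rhoTerm_nonneg hlam (by positivity))

lemma tsum_rhoTerm_le (ha1 : 1 < a) (ha2 : a < 2) (hlam : 0 ≤ lam) {N : ℕ} (hN : 1 ≤ N)
    (hhi : N * lam ≤ 1) :
    ∑' j : ℕ, rhoTerm a lam ((j : ℝ) + 1) ≤ (1 / (2 - a) + 1 / (a - 1)) * (N : ℝ) ^ (1 - a) := by
  have hhead : N * lam / (2 - a) * (N : ℝ) ^ (1 - a) ≤ 1 / (2 - a) * (N : ℝ) ^ (1 - a) := by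
    have : 0 < 2 - a := by linarith
    gcongr
  refine tsum_le_of_sum_range_le (fun j => rhoTerm_nonneg hlam (by positivity)) fun n => ?_
  calc ∑ j ∈ range n, rhoTerm a lam ((j : ℝ) + 1)
      ≤ ∑ j ∈ range (N + n), rhoTerm a lam ((j : ℝ) + 1) :=
        sum_le_sum_of_subset_of_nonneg (range_subset_range.2 (Nat.le_add_left n N))
          (fun j _ _ => rhoTerm_nonneg hlam (by positivity))
    _ = ∑ j ∈ range N, rhoTerm a lam ((j : ℝ) + 1)
          + ∑ j ∈ range n, rhoTerm a lam (((N + j : ℕ) : ℝ) + 1) := sum_range_add _ N n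
    _ ≤ N * lam / (2 - a) * (N : ℝ) ^ (1 - a) + (N : ℝ) ^ (1 - a) / (a - 1) :=
        add_le_add (sum_range_rhoTerm_le ha1.le ha2 hlam N)
          (sum_range_rhoTerm_nat_add_le ha1 hlam hN n)
    _ ≤ 1 / (2 - a) * (N : ℝ) ^ (1 - a) + (N : ℝ) ^ (1 - a) / (a - 1) := by linarith
    _ = (1 / (2 - a) + 1 / (a - 1)) * (N : ℝ) ^ (1 - a) := by ring

end RhoTerm

lemma exists_nat_one_le_half_le_mul_le_one {lam : ℝ} (h0 : 0 < lam) (h1 : lam ≤ 1) :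
    ∃ N : ℕ, 1 ≤ N ∧ 1 / 2 ≤ N * lam ∧ N * lam ≤ 1 := by
  have hinv : 1 ≤ lam⁻¹ := (one_le_inv₀ h0).2 h1
  have hN : 1 ≤ ⌊lam⁻¹⌋₊ := Nat.le_floor (by exact_mod_cast hinv)
  have hN' : (1 : ℝ) ≤ ⌊lam⁻¹⌋₊ := by exact_mod_cast hN
  have hlt : 1 < (⌊lam⁻¹⌋₊ + 1) * lam := by
    have := (inv_lt_iff_one_lt_mul₀ h0).1 (Nat.lt_floor_add_one lam⁻¹)
    linarith
  refine ⟨⌊lam⁻¹⌋₊, hN, by nlinarith, ?_⟩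
  calc (⌊lam⁻¹⌋₊ : ℝ) * lam ≤ lam⁻¹ * lam := by gcongr; exact Nat.floor_le (by positivity)
    _ = 1 := inv_mul_cancel₀ h0.ne'

lemma rpow_le_rpow_neg_le_two_mul {b y t : ℝ} (hb0 : 0 ≤ b) (hb1 : b ≤ 1) (ht : 0 < t)
    (hlo : 1 / 2 ≤ y * t) (hhi : y * t ≤ 1) :
    t ^ b ≤ y ^ (-b) ∧ y ^ (-b) ≤ 2 * t ^ b := by
  have hy : 0 < y := pos_of_mul_pos_left (by linarith) ht.le
  have hscale : y ^ (-b) = (y * t) ^ (-b) * t ^ b := by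
    rw [mul_rpow hy.le ht.le, rpow_neg ht.le, mul_assoc, inv_mul_cancel₀ (rpow_pos_of_pos ht b).ne',
      mul_one]
  have hfac_lo : 1 ≤ (y * t) ^ (-b) :=
    one_le_rpow_of_pos_of_le_one_of_nonpos (by linarith) hhi (by linarith)
  have hfac_hi : (y * t) ^ (-b) ≤ 2 :=
    calc (y * t) ^ (-b) ≤ (1 / 2) ^ (-b) := rpow_le_rpow_of_nonpos (by norm_num) hlo (by linarith)
      _ = 2 ^ b := by rw [one_div, inv_rpow (by norm_num), rpow_neg (by norm_num), inv_inv]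
      _ ≤ 2 ^ (1 : ℝ) := rpow_le_rpow_of_exponent_le (by norm_num) hb1
      _ = 2 := rpow_one 2
  have htb : 0 < t ^ b := rpow_pos_of_pos ht b
  rw [hscale]
  constructor <;> nlinarith

/-- For `a ∈ (1,2)`, `Σ_{j≥1} (jλ/(jλ+1)) j^{-a} ≍ λ^{a-1}` uniformly over `λ ∈ (0,1)`. -/
theorem stmt_4 (a : ℝ) (ha1 : 1 < a) (ha2 : a < 2) :
    ∃ c C : ℝ, 0 < c ∧ c ≤ C ∧
      ∀ lam : ℝ, 0 < lam → lam < 1 →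
        c * lam ^ (a - 1) ≤
          (∑' j : ℕ, (((j : ℝ) + 1) * lam / (((j : ℝ) + 1) * lam + 1)) * ((j : ℝ) + 1) ^ (-a)) ∧
        (∑' j : ℕ, (((j : ℝ) + 1) * lam / (((j : ℝ) + 1) * lam + 1)) * ((j : ℝ) + 1) ^ (-a)) ≤
          C * lam ^ (a - 1) := by
  set K := 1 / (2 - a) + 1 / (a - 1)
  have hK : 1 ≤ K := by
    have : 1 ≤ 1 / (2 - a) := by rw [le_div_iff₀ (by linarith)]; linarith
    have : 0 < 1 / (a - 1) := by rw [one_div_pos]; linarith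
    linarith
  refine ⟨1 / 4, 2 * K, by norm_num, by linarith, fun lam hlam0 hlam1 => ?_⟩
  obtain ⟨N, hN, hlo, hhi⟩ := exists_nat_one_le_half_le_mul_le_one hlam0 hlam1.le
  obtain ⟨hscale_lo, hscale_hi⟩ :=
    rpow_le_rpow_neg_le_two_mul (b := a - 1) (by linarith) (by linarith) hlam0 hlo hhi
  rw [neg_sub] at hscale_lo hscale_hi
  constructor
  · calc 1 / 4 * lam ^ (a - 1) ≤ (N : ℝ) ^ (1 - a) / 4 := by linarith
      _ ≤ _ := le_tsum_rhoTerm ha1 hlam0.le hlo hhi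
  · calc _ ≤ K * (N : ℝ) ^ (1 - a) := tsum_rhoTerm_le ha1 ha2 hlam0.le hN hhi
      _ ≤ K * (2 * lam ^ (a - 1)) := by gcongr
      _ = 2 * K * lam ^ (a - 1) := by ring
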